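/- arXiv:2304.13944 — 2 statements merged into one kernel-verified Lean document; each statement's English description precedes it below -/
import Mathlib

section
/- Let n ≥ 2, let p : {0, …, n−1} → ℝ be strictly increasing, and let η : {0, …, n−1} → ℝ be such that the points (p_i, η_i) are in convex position, i.e., for all i < j < k, (η_j − η_i)/(p_j − p_i) ≤ (η_k − η_j)/(p_k − p_j). Fix an index i with i + 1 ≤ n − 1 and t ∈ [0, 1], and set x = (1 − t)·p_i + t·p_{i+1}. Then the minimum of Σ_k η_k λ_k over all λ ∈ ℝ^n with λ_k ≥ 0 for all k, Σ_k λ_k = 1, and Σ_k p_k λ_k = x, equals (1 − t)·η_i + t·η_{i+1}. (The λ-interpolation model of a convex piecewise-linear cost function is exact under minimization.) -/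
/-- Exactness of the λ-interpolation model of a convex piecewise-linear cost:
for sample points `(p_k, η_k)` in convex position with `p` strictly increasing,
and a target `x = (1−t)·p_i + t·p_{i+1}` with `t ∈ [0,1]`, the minimum of
`Σ η_k λ_k` over `λ ≥ 0`, `Σ λ_k = 1`, `Σ p_k λ_k = x` equals `(1−t)·η_i + t·η_{i+1}`. -/
theorem lambda_interpolation_exact (n : ℕ) (hn : 2 ≤ n) (p η : Fin n → ℝ)
    (hp : StrictMono p)
    (hconv : ∀ i j k : Fin n, i < j → j < k →
      (η j - η i) / (p j - p i) ≤ (η k - η j) / (p k - p j))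
    (i : Fin n) (hi : (i : ℕ) + 1 ≤ n - 1) (hi' : (i : ℕ) + 1 < n)
    (t : ℝ) (ht0 : 0 ≤ t) (ht1 : t ≤ 1) :
    IsLeast
      {v : ℝ | ∃ lam : Fin n → ℝ, (∀ k, 0 ≤ lam k) ∧ (∑ k, lam k) = 1 ∧
        (∑ k, p k * lam k) = (1 - t) * p i + t * p ⟨(i : ℕ) + 1, hi'⟩ ∧
        v = ∑ k, η k * lam k}
      ((1 - t) * η i + t * η ⟨(i : ℕ) + 1, hi'⟩) := by
  set j : Fin n := ⟨(i : ℕ) + 1, hi'⟩ with hj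
  have hij : i < j := by simp [hj, Fin.lt_def]
  have hne : i ≠ j := Fin.ne_of_lt hij
  have hpij : p i < p j := hp hij
  have hd : (0:ℝ) < p j - p i := sub_pos.mpr hpij
  set a : ℝ := (η j - η i) / (p j - p i) with ha
  have haj : a * (p j - p i) = η j - η i := div_mul_cancel₀ _ hd.ne'
  have key : ∀ k, η i + a * (p k - p i) ≤ η k := by
    intro k
    rcases lt_trichotomy k i with hk | hk | hk
    · have h := hconv k i j hk hij
      have hd2 : (0:ℝ) < p i - p k := sub_pos.mpr (hp hk)
      rw [← ha, div_le_iff₀ hd2] at h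
      nlinarith [h]
    · subst hk; simp
    · rcases lt_trichotomy k j with hk2 | hk2 | hk2
      · exfalso
        have h1 : (i : ℕ) < (k : ℕ) := hk
        have h2 : (k : ℕ) < (i : ℕ) + 1 := hk2
        omega
      · subst hk2; nlinarith [haj]
      · have h := hconv i j k hij hk2
        have hd3 : (0:ℝ) < p k - p j := sub_pos.mpr (hp hk2)
        rw [← ha, le_div_iff₀ hd3] at h
        nlinarith [h, haj]
  constructor
  · refine ⟨fun k => (1 - t) * (if i = k then 1 else 0) + t * (if j = k then 1 else 0),
      ?_, ?_, ?_, ?_⟩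
    · intro k
      dsimp only
      have h1 : (0:ℝ) ≤ (1 - t) * (if i = k then 1 else 0) := by
        split <;> simp <;> linarith
      have h2 : (0:ℝ) ≤ t * (if j = k then 1 else 0) := by
        split <;> simp [ht0]
      linarith
    · simp [Finset.sum_add_distrib, ← Finset.mul_sum, Finset.sum_ite_eq]
    · simp only [mul_add, mul_ite, mul_one, mul_zero, Finset.sum_add_distrib,
        Finset.sum_ite_eq, Finset.mem_univ, if_true]
      ring
    · simp only [mul_add, mul_ite, mul_one, mul_zero, Finset.sum_add_distrib,
        Finset.sum_ite_eq, Finset.mem_univ, if_true]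
      ring
  · rintro v ⟨lam, hnn, hs1, hsp, hv⟩
    have hle : ∑ k, (η i + a * (p k - p i)) * lam k ≤ ∑ k, η k * lam k :=
      Finset.sum_le_sum fun k _ => mul_le_mul_of_nonneg_right (key k) (hnn k)
    have hsum : ∑ k, (η i + a * (p k - p i)) * lam k
        = (η i - a * p i) * (∑ k, lam k) + a * (∑ k, p k * lam k) := by
      rw [Finset.mul_sum, Finset.mul_sum, ← Finset.sum_add_distrib]
      exact Finset.sum_congr rfl fun k _ => by ring
    rw [hsum, hs1, hsp] at hle
    rw [hv]
    nlinarith [hle, haj]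
end

section
/- Flow certificate implies spanning connectedness: let V and E be nonempty finite sets, src, tgt : E → V (an oriented multigraph), r ∈ V a fixed root, and z : E → {0,1} (active-edge indicators). Define α : V → ℝ by α(r) = |V| − 1 and α(v) = −1 for v ≠ r. Suppose there exists ρ : E → ℝ such that ρ(e) = 0 whenever z(e) = 0, and for every v ∈ V the net divergence Σ_{e : src(e)=v} ρ(e) − Σ_{e : tgt(e)=v} ρ(e) = α(v). Then the subgraph of active edges is spanning connected: for every v ∈ V there is a walk from v to r using only edges e with z(e) = 1 (traversed in either direction). -/
/-! If some vertex `v` cannot reach the root through active edges, let `T` be the set of all such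
vertices. Every edge carrying nonzero flow is active, so it has both ends in `T` or neither;
summing the divergence equations over `T`, each such edge contributes `+ρ e` and `-ρ e`, so the
total is `0`. But `r ∉ T`, so the right-hand sides add up to `-|T| < 0`. -/

open Finset

theorem sum_divergence_eq_zero_of_flow_closed {V E M : Type*} [Fintype E] [DecidableEq V]
    [AddCommGroup M] (src tgt : E → V) (ρ : E → M) (T : Finset V)
    (hT : ∀ e, ρ e ≠ 0 → (src e ∈ T ↔ tgt e ∈ T)) :
    ∑ v ∈ T, ((∑ e ∈ univ.filter fun e => src e = v, ρ e) -
      ∑ e ∈ univ.filter fun e => tgt e = v, ρ e) = 0 := by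
  rw [sum_sub_distrib, sub_eq_zero, sum_fiberwise_eq_sum_filter, sum_fiberwise_eq_sum_filter,
    sum_filter, sum_filter]
  refine sum_congr rfl fun e _ => ?_
  by_cases he : ρ e = 0
  · simp [he]
  · simp only [hT e he]

theorem flow_certificate_connected_general (V E : Type*) [Fintype V] [Fintype E]
    [DecidableEq V]
    (src tgt : E → V) (r : V) (z : E → Bool) (α : V → ℝ)
    (hα : ∀ v, α v = if v = r then (Fintype.card V : ℝ) - 1 else -1)
    (ρ : E → ℝ) (hρ : ∀ e, z e = false → ρ e = 0)
    (hdiv : ∀ v, (∑ e ∈ Finset.univ.filter fun e => src e = v, ρ e) -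
      (∑ e ∈ Finset.univ.filter fun e => tgt e = v, ρ e) = α v) :
    ∀ v : V, Relation.ReflTransGen
      (fun a b => ∃ e, z e = true ∧ ((src e = a ∧ tgt e = b) ∨ (src e = b ∧ tgt e = a)))
      v r := by
  classical
  intro v
  by_contra hv
  set R := fun a b => ∃ e, z e = true ∧ ((src e = a ∧ tgt e = b) ∨ (src e = b ∧ tgt e = a))
  set T := univ.filter fun u => ¬ Relation.ReflTransGen R u r
  have hmemT : ∀ u, u ∈ T ↔ ¬ Relation.ReflTransGen R u r := fun u => by simp [T]
  have hactive : ∀ e, ρ e ≠ 0 → z e = true := fun e he =>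
    Bool.not_eq_false _ |>.mp fun h => he (hρ e h)
  have hclosed : ∀ e, ρ e ≠ 0 → (src e ∈ T ↔ tgt e ∈ T) := fun e he => by
    rw [hmemT, hmemT]
    exact not_congr ⟨.head ⟨e, hactive e he, .inr ⟨rfl, rfl⟩⟩,
      .head ⟨e, hactive e he, .inl ⟨rfl, rfl⟩⟩⟩
  have hα_T : ∀ u ∈ T, α u = -1 := fun u hu => by
    rw [hα u, if_neg]
    rintro rfl
    exact (hmemT u).mp hu .refl
  have hsum : ∑ u ∈ T, α u = 0 := by
    rw [← sum_divergence_eq_zero_of_flow_closed src tgt ρ T hclosed]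
    exact sum_congr rfl fun u _ => (hdiv u).symm
  rw [sum_congr rfl hα_T, sum_const, nsmul_eq_mul, mul_neg_one, neg_eq_zero,
    Nat.cast_eq_zero, card_eq_zero] at hsum
  exact notMem_empty v (hsum ▸ (hmemT v).mpr hv)

/-- Flow certificate implies spanning connectedness: on an oriented finite multigraph
`(V, E, src, tgt)` with root `r`, injections `α(r) = |V| − 1` and `α(v) = −1` otherwise,
if a flow `ρ` vanishing on inactive edges (`z e = false`) satisfies the divergence
equations `Σ_{src e = v} ρ(e) − Σ_{tgt e = v} ρ(e) = α(v)` at every vertex, then every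
vertex is joined to the root by a walk using only active edges. -/
theorem flow_certificate_connected (V E : Type*) [Fintype V] [Fintype E]
    [Nonempty V] [Nonempty E] [DecidableEq V]
    (src tgt : E → V) (r : V) (z : E → Bool) (α : V → ℝ)
    (hα : ∀ v, α v = if v = r then (Fintype.card V : ℝ) - 1 else -1)
    (ρ : E → ℝ) (hρ : ∀ e, z e = false → ρ e = 0)
    (hdiv : ∀ v, (∑ e ∈ Finset.univ.filter fun e => src e = v, ρ e) -
      (∑ e ∈ Finset.univ.filter fun e => tgt e = v, ρ e) = α v) :
    ∀ v : V, Relation.ReflTransGen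
      (fun a b => ∃ e, z e = true ∧ ((src e = a ∧ tgt e = b) ∨ (src e = b ∧ tgt e = a)))
      v r :=
  flow_certificate_connected_general V E src tgt r z α hα ρ hρ hdiv
end
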